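/- Fix an integer p ≥ 2. Let N ≥ 2 be an integer, q := exp(2π√−1/N), and let n₁, …, n_{2p−1} be integers with 0 ≤ n₁ ≤ n₂ ≤ … ≤ n_{2p−1} ≤ N − 1. Then ‖(q)_{n_{2p−1}}‖ · ∏_{i=1}^{2p−2} ‖[n_{i+1}; n_i]_q‖ ≤ N · 2^{(N−1)(2p−1)}. -/

import Mathlib

/-!
Every factor has norm at most `2 ^ (N - 1)`, since `‖1 - q ^ j‖ ≤ 2`. For `(q)_m` this is
immediate. For `[m; k]_q = ∏_{k < j ≤ m} (1 - q ^ j) / (q)_{m-k}` the numerator is at most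
`2 ^ (m - k)`, and the denominator is bounded below because `(q)_{N-1} = N` (the value at `1` of
`(X ^ N - 1) / (X - 1)`): dropping the last `N - 1 - (m - k)` factors, each of norm at most `2`,
gives `N ≤ ‖(q)_{m-k}‖ * 2 ^ (N - 1 - (m - k))`.
-/

/-- The q-Pochhammer symbol `(q)_n = ∏_{k=1}^n (1 - q^k)`. -/
noncomputable def qPoch (q : ℂ) (n : ℕ) : ℂ := ∏ k ∈ Finset.Icc 1 n, (1 - q ^ k)

/-- The Gaussian (q-binomial) coefficient `[m; k]_q = (q)_m / ((q)_{m-k} (q)_k)`. -/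
noncomputable def qBinom (q : ℂ) (m k : ℕ) : ℂ := qPoch q m / (qPoch q (m - k) * qPoch q k)

open Finset

theorem norm_prod_one_sub_pow_le {q : ℂ} (hq : ‖q‖ = 1) (s : Finset ℕ) :
    ‖∏ j ∈ s, (1 - q ^ j)‖ ≤ 2 ^ #s := by
  have h2 (j : ℕ) : ‖1 - q ^ j‖ ≤ 2 := by
    grw [norm_sub_le, norm_one, norm_pow, hq, one_pow, one_add_one_eq_two]
  rw [norm_prod, ← prod_const]
  exact prod_le_prod (fun _ _ => norm_nonneg _) fun j _ => h2 j

theorem qPoch_eq_prod_Ioc (q : ℂ) (m : ℕ) : qPoch q m = ∏ j ∈ Ioc 0 m, (1 - q ^ j) := rfl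

theorem qPoch_mul_prod_Ioc (q : ℂ) {a b : ℕ} (hab : a ≤ b) :
    qPoch q a * ∏ j ∈ Ioc a b, (1 - q ^ j) = qPoch q b := by
  simp only [qPoch_eq_prod_Ioc, prod_Ioc_consecutive _ a.zero_le hab]

theorem qPoch_eq_prod_range (q : ℂ) (m : ℕ) :
    qPoch q m = ∏ k ∈ range m, (1 - q ^ (k + 1)) := by
  induction m with
  | zero => rfl
  | succ m ih =>
    rw [qPoch_eq_prod_Ioc, prod_Ioc_succ_top m.zero_le, ← qPoch_eq_prod_Ioc, ih, prod_range_succ]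

theorem norm_qPoch_le {q : ℂ} (hq : ‖q‖ = 1) (m : ℕ) : ‖qPoch q m‖ ≤ 2 ^ m := by
  rw [qPoch_eq_prod_Ioc]
  exact (norm_prod_one_sub_pow_le hq _).trans_eq (by rw [Nat.card_Ioc, Nat.sub_zero])

theorem qBinom_eq_div (q : ℂ) {m k : ℕ} (hkm : k ≤ m) (hk : qPoch q k ≠ 0) :
    qBinom q m k = (∏ j ∈ Ioc k m, (1 - q ^ j)) / qPoch q (m - k) := by
  rw [qBinom, ← qPoch_mul_prod_Ioc q hkm, mul_comm (qPoch q (m - k)), mul_div_mul_left _ _ hk]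

namespace IsPrimitiveRoot

variable {N : ℕ} {q : ℂ} (hq : IsPrimitiveRoot q N)
include hq

theorem qPoch_sub_one (hN : N ≠ 0) : qPoch q (N - 1) = N := by
  obtain ⟨M, rfl⟩ := Nat.exists_eq_add_one_of_ne_zero hN
  rw [qPoch_eq_prod_range, Nat.add_sub_cancel, hq.prod_one_sub_pow_eq_order, Nat.cast_succ]

theorem le_norm_qPoch_mul_pow {m : ℕ} (hm : m < N) :
    (N : ℝ) ≤ ‖qPoch q m‖ * 2 ^ (N - 1 - m) := by
  have hN : N ≠ 0 := by omega
  calc (N : ℝ) = ‖qPoch q m‖ * ‖∏ j ∈ Ioc m (N - 1), (1 - q ^ j)‖ := by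
        rw [← norm_mul, qPoch_mul_prod_Ioc q (by omega), hq.qPoch_sub_one hN,
          Complex.norm_natCast]
    _ ≤ ‖qPoch q m‖ * 2 ^ (N - 1 - m) := by
        grw [norm_prod_one_sub_pow_le (hq.norm'_eq_one hN), Nat.card_Ioc]

theorem qPoch_ne_zero {m : ℕ} (hm : m < N) : qPoch q m ≠ 0 := by
  have h := qPoch_mul_prod_Ioc q (Nat.le_sub_one_of_lt hm)
  rw [hq.qPoch_sub_one (by omega)] at h
  exact left_ne_zero_of_mul (h ▸ Nat.cast_ne_zero.2 (by omega))

theorem norm_qBinom_le {m k : ℕ} (hkm : k ≤ m) (hm : m < N) :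
    ‖qBinom q m k‖ ≤ 2 ^ (N - 1) := by
  have hqn : ‖q‖ = 1 := hq.norm'_eq_one (by omega)
  have hP := hq.qPoch_ne_zero (m := m - k) (by omega)
  rw [qBinom_eq_div q hkm (hq.qPoch_ne_zero (by omega)), norm_div,
    div_le_iff₀ (norm_pos_iff.2 hP)]
  calc ‖∏ j ∈ Ioc k m, (1 - q ^ j)‖ ≤ 2 ^ (m - k) * 1 := by
        rw [mul_one, ← Nat.card_Ioc]; exact norm_prod_one_sub_pow_le hqn _
    _ ≤ 2 ^ (m - k) * (‖qPoch q (m - k)‖ * 2 ^ (N - 1 - (m - k))) := by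
        gcongr
        exact le_trans (by exact_mod_cast (by omega : 1 ≤ N))
          (hq.le_norm_qPoch_mul_pow (by omega))
    _ = 2 ^ (N - 1) * ‖qPoch q (m - k)‖ := by
        rw [mul_left_comm, ← pow_add, Nat.add_sub_cancel' (by omega : m - k ≤ N - 1), mul_comm]

end IsPrimitiveRoot

theorem qfactor_norm_le (p : ℕ) (hp : 2 ≤ p) (N : ℕ) (hN : 2 ≤ N) (n : ℕ → ℕ)
    (hmono : ∀ i : ℕ, 1 ≤ i → i ≤ 2 * p - 2 → n i ≤ n (i + 1))
    (hbd : n (2 * p - 1) ≤ N - 1) :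
    ‖qPoch (Complex.exp (2 * Real.pi * Complex.I / (N : ℂ))) (n (2 * p - 1))‖
        * ∏ i ∈ Finset.Icc 1 (2 * p - 2),
            ‖qBinom (Complex.exp (2 * Real.pi * Complex.I / (N : ℂ))) (n (i + 1)) (n i)‖
      ≤ (N : ℝ) * 2 ^ ((N - 1) * (2 * p - 1)) := by
  set q := Complex.exp (2 * Real.pi * Complex.I / (N : ℂ))
  have hq : IsPrimitiveRoot q N := Complex.isPrimitiveRoot_exp N (by omega)
  have hn : MonotoneOn n (Set.Icc 1 (2 * p - 1)) :=
    monotoneOn_of_le_add_one Set.ordConnected_Icc fun i _ hi hi' => hmono i hi.1 (by grind)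
  have hbinom : ∀ i ∈ Icc 1 (2 * p - 2), ‖qBinom q (n (i + 1)) (n i)‖ ≤ 2 ^ (N - 1) := by
    intro i hi
    rw [mem_Icc] at hi
    refine hq.norm_qBinom_le (hmono i hi.1 hi.2) (lt_of_le_of_lt ?_ (by omega : N - 1 < N))
    exact (hn ⟨by omega, by omega⟩ ⟨by omega, le_rfl⟩ (by omega)).trans hbd
  calc _ ≤ (2 : ℝ) ^ (N - 1) * (2 ^ (N - 1)) ^ (2 * p - 2) := by
        gcongr
        · exact (norm_qPoch_le (hq.norm'_eq_one (by omega)) _).trans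
            (pow_le_pow_right₀ one_le_two hbd)
        · exact (prod_le_prod (fun _ _ => norm_nonneg _) hbinom).trans_eq
            (by rw [prod_const, Nat.card_Icc, Nat.add_sub_cancel])
    _ = (2 : ℝ) ^ ((N - 1) * (2 * p - 1)) := by
        rw [← pow_succ', ← pow_mul]
        congr 2
        omega
    _ ≤ (N : ℝ) * 2 ^ ((N - 1) * (2 * p - 1)) :=
        le_mul_of_one_le_left (by positivity) (by exact_mod_cast (by omega : 1 ≤ N))
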